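/- arXiv:1804.03707 — 4 statements merged into one kernel-verified Lean document; each statement's English description precedes it below -/
import Mathlib

section
/- For μ,ν ∈ (0,1) with μ ≠ ν, define μ(δ) = (μ − δ(μ−ν))/(1 − δ(μ−ν)) and ν(δ) = ν/(1 − δ(μ−ν)) for δ ∈ [0,1). Then the function δ ↦ H(δ) := (ν/(1−μ+ν))·h(μ(δ)) + ((1−μ)/(1−μ+ν))·h(ν(δ)) is strictly increasing on [0,1). -/
/-!
Let `π = ν / (1 - μ + ν)` be the stationary weight of the first state. For every `δ` one has
`π μ(δ) + (1 - π) ν(δ) = π`, and `μ(δ)`, `ν(δ)` are the points at the common parameter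
`τ(δ) = δ (1 - μ + ν) / (1 - δ (μ - ν))` on the segments from `μ` and `ν` to `π`; `τ` increases
from `0` towards `1`. So `H` is the `π`-weighted sum of the strictly concave `h` at two points that
move affinely towards their fixed barycenter. Moving a further fraction `r` of the way raises the
weighted sum by at least `r (h(π) - H)` (concavity), which is positive by strict Jensen.
-/

open Set AffineMap

/-- The binary entropy function (natural logarithm). -/
noncomputable def binEnt (a : ℝ) : ℝ := -(a * Real.log a) - (1 - a) * Real.log (1 - a)

lemma binEnt_eq_binEntropy (a : ℝ) : binEnt a = Real.binEntropy a := by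
  simp only [binEnt, Real.binEntropy, Real.log_inv, mul_neg]; ring

section LineMap

variable {E : Type*} [AddCommGroup E] [Module ℝ E] {s : Set E} {f : E → ℝ}

lemma ConcaveOn.le_map_lineMap (hf : ConcaveOn ℝ s f) {x y : E}
    (hx : x ∈ s) (hy : y ∈ s) {t : ℝ} (ht : t ∈ Icc (0 : ℝ) 1) :
    (1 - t) * f x + t * f y ≤ f (lineMap x y t) := by
  rw [lineMap_apply_module]
  exact hf.2 hx hy (by linarith [ht.2]) ht.1 (by ring)

lemma lineMap_left_injective {y : E} {t : ℝ} (ht : t ≠ 1) :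
    Function.Injective (fun x : E => lineMap x y t) := by
  intro x₁ x₂ h
  simp only [lineMap_apply_module, add_left_inj] at h
  exact smul_right_injective E (sub_ne_zero.2 (Ne.symm ht)) h

lemma smul_lineMap_add_smul_lineMap_of_barycenter {a b c : E} {p q : ℝ} (hpq : p + q = 1)
    (hc : p • a + q • b = c) (t : ℝ) :
    p • lineMap a c t + q • lineMap b c t = c := by
  obtain rfl : q = 1 - p := by linarith
  subst hc
  simp only [lineMap_apply_module]
  module

theorem StrictConcaveOn.strictMonoOn_weighted_lineMap_barycenter (hf : StrictConcaveOn ℝ s f)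
    {a b c : E} (ha : a ∈ s) (hb : b ∈ s) (hab : a ≠ b)
    {p q : ℝ} (hp : 0 < p) (hq : 0 < q) (hpq : p + q = 1) (hc : p • a + q • b = c) :
    StrictMonoOn (fun t : ℝ => p * f (lineMap a c t) + q * f (lineMap b c t)) (Icc 0 1) := by
  have hcs : c ∈ s := hc ▸ hf.1 ha hb hp.le hq.le hpq
  intro t₀ ht₀ t ht hlt
  set x := lineMap a c t₀
  set y := lineMap b c t₀
  have hx : x ∈ s := hf.1.lineMap_mem ha hcs ht₀
  have hy : y ∈ s := hf.1.lineMap_mem hb hcs ht₀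
  have ht₀1 : t₀ < 1 := hlt.trans_le ht.2
  have hgap : p * f x + q * f y < f c := by
    have hxy : x ≠ y := fun h => hab (lineMap_left_injective ht₀1.ne h)
    have hbar : p • x + q • y = c := smul_lineMap_add_smul_lineMap_of_barycenter hpq hc t₀
    simpa only [smul_eq_mul, hbar] using hf.2 hx hy hxy hp hq hpq
  set r := (t - t₀) / (1 - t₀)
  have hr0 : 0 < r := div_pos (by linarith) (by linarith)
  have hr : r ∈ Icc (0 : ℝ) 1 := ⟨hr0.le, (div_le_one (by linarith)).2 (by linarith [ht.2])⟩
  have hrt : t = 1 - (1 - r) * (1 - t₀) := by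
    have : 1 - t₀ ≠ 0 := by linarith
    simp only [r]; field_simp; ring
  calc p * f x + q * f y
      < (1 - r) * (p * f x + q * f y) + r * f c := by linarith [mul_lt_mul_of_pos_left hgap hr0]
    _ = p * ((1 - r) * f x + r * f c) + q * ((1 - r) * f y + r * f c) := by
      linear_combination r * f c * hpq.symm
    _ ≤ p * f (lineMap x c r) + q * f (lineMap y c r) := by
      gcongr
      · exact hf.concaveOn.le_map_lineMap hx hcs hr
      · exact hf.concaveOn.le_map_lineMap hy hcs hr
    _ = p * f (lineMap a c t) + q * f (lineMap b c t) := by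
      rw [lineMap_lineMap_left, lineMap_lineMap_left, ← hrt]

end LineMap

lemma one_sub_mul_pos_of_mem_Ico {d δ : ℝ} (hd : d < 1) (hδ : δ ∈ Ico (0 : ℝ) 1) :
    0 < 1 - δ * d := by
  obtain ⟨hδ0, hδ1⟩ := hδ
  rcases le_total d 0 with h | h <;> nlinarith

lemma strictMonoOn_mul_one_sub_div_one_sub_mul {d : ℝ} (hd : d < 1) :
    StrictMonoOn (fun δ : ℝ => δ * (1 - d) / (1 - δ * d)) (Ico 0 1) := by
  intro x hx y hy hxy
  rw [div_lt_div_iff₀ (one_sub_mul_pos_of_mem_Ico hd hx) (one_sub_mul_pos_of_mem_Ico hd hy)]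
  nlinarith [mul_pos (sub_pos.2 hxy) (sub_pos.2 hd)]

lemma mapsTo_mul_one_sub_div_one_sub_mul {d : ℝ} (hd : d < 1) :
    MapsTo (fun δ : ℝ => δ * (1 - d) / (1 - δ * d)) (Ico 0 1) (Icc 0 1) := by
  intro δ hδ
  have hpos := one_sub_mul_pos_of_mem_Ico hd hδ
  exact ⟨div_nonneg (mul_nonneg hδ.1 (by linarith)) hpos.le,
    (div_le_one hpos).2 (by linarith [hδ.2])⟩

/-- For `μ,ν ∈ (0,1)` with `μ ≠ ν`, the entropy rate
`H(δ) = (ν/(1-μ+ν)) h(μ(δ)) + ((1-μ)/(1-μ+ν)) h(ν(δ))` of the deletion-transformed machine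
`g_{(μ,ν)}(δ)`, with `μ(δ) = (μ - δ(μ-ν))/(1 - δ(μ-ν))` and `ν(δ) = ν/(1 - δ(μ-ν))`,
is strictly increasing on `[0,1)`. -/
theorem stmt_8 (μ ν : ℝ) (hμ : μ ∈ Set.Ioo (0 : ℝ) 1) (hν : ν ∈ Set.Ioo (0 : ℝ) 1)
    (hne : μ ≠ ν) :
    StrictMonoOn
      (fun δ : ℝ =>
        (ν / (1 - μ + ν)) * binEnt ((μ - δ * (μ - ν)) / (1 - δ * (μ - ν))) +
          ((1 - μ) / (1 - μ + ν)) * binEnt (ν / (1 - δ * (μ - ν))))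
      (Set.Ico (0 : ℝ) 1) := by
  obtain ⟨hμ0, hμ1⟩ := hμ
  obtain ⟨hν0, hν1⟩ := hν
  have hd : μ - ν < 1 := by linarith
  have hS : 0 < 1 - μ + ν := by linarith
  have hbar : (ν / (1 - μ + ν)) • μ + ((1 - μ) / (1 - μ + ν)) • ν = ν / (1 - μ + ν) := by
    simp only [smul_eq_mul]; field_simp; ring
  have hH := Real.strictConcave_binEntropy.strictMonoOn_weighted_lineMap_barycenter
    ⟨hμ0.le, hμ1.le⟩ ⟨hν0.le, hν1.le⟩ hne (div_pos hν0 hS) (div_pos (by linarith) hS)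
    (by field_simp; ring) hbar
  refine (hH.comp (strictMonoOn_mul_one_sub_div_one_sub_mul hd)
    (mapsTo_mul_one_sub_div_one_sub_mul hd)).congr fun δ hδ => ?_
  have hpos := one_sub_mul_pos_of_mem_Ico hd hδ
  simp only [Function.comp, binEnt_eq_binEntropy, lineMap_apply_ring]
  congr 3 <;> field_simp <;> ring
end

section
/- For μ,ν ∈ (0,1) with μ ≠ ν, the derivative with respect to δ of H(δ) (as defined from the deletion-transformed parameters μ(δ), ν(δ)) equals [α(1−μ)ν / ((1−αδ)²(1−α))]·log[((μ−δα)(1−ν−δα))/((1−μ)ν)], where α = μ−ν, and this derivative is positive for all δ ∈ (0,1). -/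
open Real

theorem binEnt_eq_binEntropy_s9 : binEnt = binEntropy := by
  funext p
  simp only [binEnt, binEntropy, log_inv]
  ring

theorem hasDerivAt_binEnt_div {a D : ℝ} (ha : a ≠ 0) (hD : D ≠ 0) (hDa : D - a ≠ 0) :
    HasDerivAt binEnt (log (D - a) - log a) (a / D) := by
  have h1 : a / D ≠ 1 := fun h => hDa (by rw [div_eq_one_iff_eq hD] at h; rw [h, sub_self])
  have h := hasDerivAt_binEntropy (div_ne_zero ha hD) h1
  rw [← binEnt_eq_binEntropy_s9, one_sub_div hD, log_div hDa hD, log_div ha hD] at h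
  convert h using 1
  ring

theorem mul_log_pos_of_mul_sub_one_pos {c x : ℝ} (hx : 0 < x) (h : 0 < c * (x - 1)) :
    0 < c * log x := by
  rcases pos_and_pos_or_neg_and_neg_of_mul_pos h with ⟨hc, hx1⟩ | ⟨hc, hx1⟩
  · exact mul_pos hc (log_pos (by linarith))
  · exact mul_pos_of_neg_of_neg hc (log_neg hx (by linarith))

theorem hasDerivAt_sub_mul_div_one_sub_mul {a c δ : ℝ} (hD : 1 - δ * c ≠ 0) :
    HasDerivAt (fun δ : ℝ => (a - δ * c) / (1 - δ * c)) (-(c * (1 - a)) / (1 - δ * c) ^ 2) δ := by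
  have hlin (b : ℝ) := (hasDerivAt_mul_const (x := δ) c).const_sub b
  exact ((hlin a).div (hlin 1) hD).congr_deriv (by ring)

theorem hasDerivAt_div_one_sub_mul {a c δ : ℝ} (hD : 1 - δ * c ≠ 0) :
    HasDerivAt (fun δ : ℝ => a / (1 - δ * c)) (c * a / (1 - δ * c) ^ 2) δ := by
  have hlin := (hasDerivAt_mul_const (x := δ) c).const_sub 1
  exact ((hasDerivAt_const δ a).div hlin hD).congr_deriv (by ring)

/-- `H(δ)`, with `α = μ - ν`. -/
noncomputable def deletionEntropy (μ ν δ : ℝ) : ℝ :=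
  ν / (1 - μ + ν) * binEnt ((μ - δ * (μ - ν)) / (1 - δ * (μ - ν))) +
    (1 - μ) / (1 - μ + ν) * binEnt (ν / (1 - δ * (μ - ν)))

noncomputable def deletionEntropyDeriv (μ ν δ : ℝ) : ℝ :=
  (μ - ν) * (1 - μ) * ν / ((1 - (μ - ν) * δ) ^ 2 * (1 - (μ - ν))) *
    log ((μ - δ * (μ - ν)) * (1 - ν - δ * (μ - ν)) / ((1 - μ) * ν))

section DeletionEntropy

variable {μ ν δ : ℝ}

theorem hasDerivAt_deletionEntropy (hμ : μ < 1) (hν : 0 < ν) (hm : 0 < μ - δ * (μ - ν))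
    (hn : 0 < 1 - ν - δ * (μ - ν)) :
    HasDerivAt (deletionEntropy μ ν) (deletionEntropyDeriv μ ν δ) δ := by
  have hμ' : 1 - μ ≠ 0 := by linarith
  have hD : 1 - δ * (μ - ν) ≠ 0 := by linarith
  have hα : 1 - μ + ν ≠ 0 := by linarith
  have hDm : 1 - δ * (μ - ν) - (μ - δ * (μ - ν)) = 1 - μ := by ring
  have hDn : 1 - δ * (μ - ν) - ν = 1 - ν - δ * (μ - ν) := by ring
  have hbm := hasDerivAt_binEnt_div hm.ne' hD (hDm ▸ hμ')
  have hbn := hasDerivAt_binEnt_div hν.ne' hD (hDn ▸ hn.ne')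
  rw [hDm] at hbm
  rw [hDn] at hbn
  refine (((hbm.comp δ (hasDerivAt_sub_mul_div_one_sub_mul hD)).const_mul _).add
    ((hbn.comp δ (hasDerivAt_div_one_sub_mul hD)).const_mul _)).congr_deriv ?_
  rw [deletionEntropyDeriv, log_div (mul_ne_zero hm.ne' hn.ne') (mul_ne_zero hμ' hν.ne'),
    log_mul hm.ne' hn.ne', log_mul hμ' hν.ne', show 1 - (μ - ν) = 1 - μ + ν by ring]
  field_simp
  ring

theorem deletionEntropyDeriv_pos (hμ : μ < 1) (hν : 0 < ν) (hm : 0 < μ - δ * (μ - ν))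
    (hn : 0 < 1 - ν - δ * (μ - ν)) (hδ : δ < 1) (hne : μ ≠ ν) :
    0 < deletionEntropyDeriv μ ν δ := by
  have hμ' : 0 < 1 - μ := by linarith
  have hD : 0 < 1 - (μ - ν) * δ := by linarith
  have hα : 0 < 1 - (μ - ν) := by linarith
  refine mul_log_pos_of_mul_sub_one_pos (by positivity) ?_
  have hprod : (μ - δ * (μ - ν)) * (1 - ν - δ * (μ - ν)) - (1 - μ) * ν =
      (μ - ν) * (1 - δ) * (1 - (μ - ν) * δ) := by ring
  have hsq : 0 < (μ - ν) ^ 2 := by positivity [sub_ne_zero.2 hne]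
  have hδ' : 0 < 1 - δ := by linarith
  calc 0 < (μ - ν) ^ 2 * (1 - δ) / ((1 - (μ - ν) * δ) * (1 - (μ - ν))) := by positivity
    _ = _ := by
        rw [div_sub_one (by positivity), hprod]
        field_simp

end DeletionEntropy

/-- For `μ,ν ∈ (0,1)` with `μ ≠ ν` and `α = μ - ν`, the derivative in `δ` of
`H(δ) = (ν/(1-μ+ν)) h(μ(δ)) + ((1-μ)/(1-μ+ν)) h(ν(δ))` equals
`[α(1-μ)ν / ((1-αδ)²(1-α))] log[((μ-δα)(1-ν-δα))/((1-μ)ν)]`, and this derivative is positive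
for all `δ ∈ (0,1)`. -/
theorem stmt_9 (μ ν : ℝ) (hμ : μ ∈ Set.Ioo (0 : ℝ) 1) (hν : ν ∈ Set.Ioo (0 : ℝ) 1)
    (hne : μ ≠ ν) :
    ∀ δ ∈ Set.Ioo (0 : ℝ) 1,
      HasDerivAt
        (fun δ : ℝ =>
          (ν / (1 - μ + ν)) * binEnt ((μ - δ * (μ - ν)) / (1 - δ * (μ - ν))) +
            ((1 - μ) / (1 - μ + ν)) * binEnt (ν / (1 - δ * (μ - ν))))
        ((μ - ν) * (1 - μ) * ν / ((1 - (μ - ν) * δ) ^ 2 * (1 - (μ - ν))) *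
          Real.log ((μ - δ * (μ - ν)) * (1 - ν - δ * (μ - ν)) / ((1 - μ) * ν))) δ ∧
      0 < (μ - ν) * (1 - μ) * ν / ((1 - (μ - ν) * δ) ^ 2 * (1 - (μ - ν))) *
          Real.log ((μ - δ * (μ - ν)) * (1 - ν - δ * (μ - ν)) / ((1 - μ) * ν)) := by
  rintro δ ⟨hδ0, hδ1⟩
  obtain ⟨hμ0, hμ1⟩ := hμ
  obtain ⟨hν0, hν1⟩ := hν
  have hm : 0 < μ - δ * (μ - ν) := by nlinarith
  have hn : 0 < 1 - ν - δ * (μ - ν) := by nlinarith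
  exact ⟨hasDerivAt_deletionEntropy hμ1 hν0 hm hn,
    deletionEntropyDeriv_pos hμ1 hν0 hm hn hδ1 hne⟩
end

section
/- For the deletion-transformed two-state PFSA: if g_{(μ,ν)} has state-to-state matrix P = [[μ,1−μ],[ν,1−ν]] and δ ∈ [0,1), then applying the transformation Γ_{x,δ} = Q(P,δ)Γ_x yields a machine in the same two-state class with new parameters μ(δ) = (μ − δ(μ−ν))/(1 − δ(μ−ν)) and ν(δ) = ν/(1 − δ(μ−ν)). -/
open Matrix

/-- For `g_{(μ,ν)}` with `Γ₀ = [[μ,0],[ν,0]]`, `Γ₁ = [[0,1-μ],[0,1-ν]]`,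
`P = Γ₀ + Γ₁` and `Q(P,δ) = (1-δ)(I-δP)⁻¹`, the transformed `Γ`-matrices `Q(P,δ)Γ_x` are those
of the machine `g_{(μ(δ),ν(δ))}` in the same two-state class, with
`μ(δ) = (μ - δ(μ-ν))/(1 - δ(μ-ν))` and `ν(δ) = ν/(1 - δ(μ-ν))`. -/
theorem stmt_10 (μ ν : ℝ) (hμ : μ ∈ Set.Ioo (0 : ℝ) 1) (hν : ν ∈ Set.Ioo (0 : ℝ) 1)
    (δ : ℝ) (hδ : δ ∈ Set.Ico (0 : ℝ) 1) :
    ((1 - δ) • (1 - δ • (!![μ, 1 - μ; ν, 1 - ν] : Matrix (Fin 2) (Fin 2) ℝ))⁻¹) *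
        !![μ, 0; ν, 0]
      = !![(μ - δ * (μ - ν)) / (1 - δ * (μ - ν)), 0; ν / (1 - δ * (μ - ν)), 0] ∧
    ((1 - δ) • (1 - δ • (!![μ, 1 - μ; ν, 1 - ν] : Matrix (Fin 2) (Fin 2) ℝ))⁻¹) *
        !![0, 1 - μ; 0, 1 - ν]
      = !![0, 1 - (μ - δ * (μ - ν)) / (1 - δ * (μ - ν)); 0, 1 - ν / (1 - δ * (μ - ν))] := by
  obtain ⟨hμ0, hμ1⟩ := hμ
  obtain ⟨hν0, hν1⟩ := hν
  obtain ⟨hδ0, hδ1⟩ := hδ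
  have hd : (0:ℝ) < 1 - δ * (μ - ν) := by nlinarith
  have h1δ : (0:ℝ) < 1 - δ := by linarith
  set d := 1 - δ * (μ - ν) with hdd
  have hA : (1 - δ • (!![μ, 1 - μ; ν, 1 - ν] : Matrix (Fin 2) (Fin 2) ℝ))
      = !![1 - δ*μ, -(δ*(1-μ)); -(δ*ν), 1 - δ*(1-ν)] := by
    ext i j
    fin_cases i <;> fin_cases j <;> simp [Matrix.one_apply] <;> ring
  have hinv : (!![1 - δ*μ, -(δ*(1-μ)); -(δ*ν), 1 - δ*(1-ν)] : Matrix (Fin 2) (Fin 2) ℝ)⁻¹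
      = ((1-δ)*d)⁻¹ • !![1 - δ*(1-ν), δ*(1-μ); δ*ν, 1 - δ*μ] := by
    apply Matrix.inv_eq_right_inv
    ext i j
    fin_cases i <;> fin_cases j <;>
      · simp [Matrix.mul_apply, Fin.sum_univ_two, Matrix.one_apply]
        field_simp
        ring
  rw [hA, hinv]
  constructor <;>
    · ext i j
      fin_cases i <;> fin_cases j <;>
        simp [Matrix.mul_apply, Fin.sum_univ_two] <;>
        (field_simp; ring)
end

section
/- The KL divergence rate between two two-state binary PFSAs g₁ = g_{(μ₁,ν₁)} and g₂ = g_{(μ₂,ν₂)} equals (ν₁ d(μ₁‖μ₂) + (1−μ₁) d(ν₁‖ν₂))/(1−μ₁+ν₁), where d(a‖b) = a log(a/b) + (1−a) log((1−a)/(1−b)) is the binary KL divergence. -/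
/-!
Write `c(a, x)` for the probability of emitting the word `x` after the symbol `a`, and
`K(a, n) = ∑_{|x| = n} c₁(a, x) log (c₁(a, x) / c₂(a, x))`. Since `c(a, b :: x) = P(a, b) c(b, x)`,
the chain rule for relative entropy gives `K(a, n + 1) = d_a + ∑_b P₁(a, b) K(b, n)`, where `d_a` is
the divergence of the rows of `a`. Averaging against the stationary law `π₁` of `g₁` makes the
second term `∑_b π₁(b) K(b, n)` again, so `∑_a π₁(a) K(a, n) = n ∑_a π₁(a) d_a`. The words of
length `n + 1` then carry total divergence `d(π₁‖π₂) + n ∑_a π₁(a) d_a`, and dividing by `n`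
leaves the limit `∑_a π₁(a) d_a`, which is the claimed formula.
-/

open Filter

/-- Stationary distribution of `g_{(μ,ν)}`: symbol `false` ↔ state `s₀`. -/
noncomputable def m2Init (μ ν : ℝ) (b : Bool) : ℝ :=
  if b then (1 - μ) / (1 - μ + ν) else ν / (1 - μ + ν)

/-- Transition/emission probabilities of `g_{(μ,ν)}`. -/
noncomputable def m2Trans (μ ν : ℝ) (a b : Bool) : ℝ :=
  if a then (if b then 1 - ν else ν) else (if b then 1 - μ else μ)

/-- Probability of emitting the word `l` given that the previous symbol was `a`. -/
noncomputable def m2ChainProb (μ ν : ℝ) : Bool → List Bool → ℝ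
  | _, [] => 1
  | a, b :: t => m2Trans μ ν a b * m2ChainProb μ ν b t

/-- Stationary probability `p_g(x)` that `g_{(μ,ν)}` emits the word `x`. -/
noncomputable def m2WordProb (μ ν : ℝ) : List Bool → ℝ
  | [] => 1
  | h :: t => m2Init μ ν h * m2ChainProb μ ν h t

/-- The binary KL divergence `d(a‖b) = a log(a/b) + (1-a) log((1-a)/(1-b))`. -/
noncomputable def binKL (a b : ℝ) : ℝ :=
  a * Real.log (a / b) + (1 - a) * Real.log ((1 - a) / (1 - b))

open Topology Real

lemma Fintype.sum_ofFn_succ {α M : Type*} [Fintype α] [AddCommMonoid M] (n : ℕ)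
    (f : List α → M) :
    ∑ x : Fin (n + 1) → α, f (List.ofFn x) = ∑ a : α, ∑ x : Fin n → α, f (a :: List.ofFn x) := by
  rw [← Fintype.sum_prod_type']
  refine Fintype.sum_equiv (Fin.consEquiv fun _ => α).symm _ _ fun x => ?_
  simp only [List.ofFn_succ, Fin.consEquiv, Equiv.symm_mk, Equiv.coe_fn_mk]
  rfl

/-- Chain rule for the relative entropy of a product of weights. -/
lemma Finset.sum_mul_mul_log_mul_div_mul {ι : Type*} (s : Finset ι) {p q : ℝ} {f g : ι → ℝ}
    (hp : p ≠ 0) (hq : q ≠ 0) (hf : ∀ i ∈ s, f i ≠ 0) (hg : ∀ i ∈ s, g i ≠ 0)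
    (hf_sum : ∑ i ∈ s, f i = 1) :
    ∑ i ∈ s, p * f i * log (p * f i / (q * g i))
      = p * log (p / q) + p * ∑ i ∈ s, f i * log (f i / g i) := by
  calc ∑ i ∈ s, p * f i * log (p * f i / (q * g i))
      = ∑ i ∈ s, (p * log (p / q) * f i + p * (f i * log (f i / g i))) := by
        refine Finset.sum_congr rfl fun i hi => ?_
        rw [← div_mul_div_comm, log_mul (div_ne_zero hp hq) (div_ne_zero (hf i hi) (hg i hi))]
        ring
    _ = p * log (p / q) + p * ∑ i ∈ s, f i * log (f i / g i) := by
        rw [Finset.sum_add_distrib, ← Finset.mul_sum, ← Finset.mul_sum, hf_sum, mul_one]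

lemma sum_stationary_mul_eq_natCast_mul {σ : Type*} [Fintype σ] {w d : σ → ℝ}
    {P : σ → σ → ℝ} (hw : ∀ b, ∑ a, w a * P a b = w b) {K : σ → ℕ → ℝ}
    (hK₀ : ∀ a, K a 0 = 0) (hK : ∀ a n, K a (n + 1) = d a + ∑ b, P a b * K b n) (n : ℕ) :
    ∑ a, w a * K a n = n * ∑ a, w a * d a := by
  induction n with
  | zero => simp [hK₀]
  | succ n ih =>
    have hstep : ∑ a, w a * ∑ b, P a b * K b n = ∑ b, w b * K b n := by
      simp_rw [Finset.mul_sum, ← mul_assoc]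
      rw [Finset.sum_comm]
      simp_rw [← Finset.sum_mul, hw]
    simp_rw [hK, mul_add, Finset.sum_add_distrib, hstep, ih]
    push_cast
    ring

lemma tendsto_div_natCast_of_succ_eq {f : ℕ → ℝ} {A D : ℝ} (hf : ∀ n, f (n + 1) = A + n * D) :
    Tendsto (fun n : ℕ => f n / n) atTop (𝓝 D) := by
  have hlim : Tendsto (fun n : ℕ => (A - D) * (n : ℝ)⁻¹ + D) atTop (𝓝 D) := by
    simpa using (tendsto_inv_atTop_nhds_zero_nat.const_mul (A - D)).add_const D
  refine hlim.congr' ?_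
  filter_upwards [eventually_ge_atTop 1] with n hn
  obtain ⟨m, rfl⟩ : ∃ m, n = m + 1 := ⟨n - 1, by omega⟩
  rw [hf]
  push_cast
  field_simp
  ring

lemma m2ChainProb_sum (μ ν : ℝ) (n : ℕ) (a : Bool) :
    ∑ x : Fin n → Bool, m2ChainProb μ ν a (List.ofFn x) = 1 := by
  induction n generalizing a with
  | zero => simp [m2ChainProb]
  | succ n ih =>
    rw [Fintype.sum_ofFn_succ]
    simp only [m2ChainProb, ← Finset.mul_sum, ih, mul_one]
    cases a <;> simp [m2Trans]

section TwoStateChain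

variable {μ ν : ℝ}

lemma m2Trans_pos (hμ : μ ∈ Set.Ioo (0 : ℝ) 1) (hν : ν ∈ Set.Ioo (0 : ℝ) 1) (a b : Bool) :
    0 < m2Trans μ ν a b := by
  obtain ⟨hμ₀, hμ₁⟩ := hμ
  obtain ⟨hν₀, hν₁⟩ := hν
  cases a <;> cases b <;> simp only [m2Trans, Bool.false_eq_true, ↓reduceIte] <;> linarith

lemma m2ChainProb_pos (hμ : μ ∈ Set.Ioo (0 : ℝ) 1) (hν : ν ∈ Set.Ioo (0 : ℝ) 1) (a : Bool)
    (l : List Bool) : 0 < m2ChainProb μ ν a l := by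
  induction l generalizing a with
  | nil => simp [m2ChainProb]
  | cons b t ih => exact mul_pos (m2Trans_pos hμ hν a b) (ih b)

lemma m2Init_pos (hμ : μ ∈ Set.Ioo (0 : ℝ) 1) (hν : ν ∈ Set.Ioo (0 : ℝ) 1) (b : Bool) :
    0 < m2Init μ ν b := by
  obtain ⟨-, hμ₁⟩ := hμ
  obtain ⟨hν₀, -⟩ := hν
  cases b <;> simp only [m2Init, Bool.false_eq_true, if_true, if_false] <;>
    apply div_pos <;> linarith

lemma m2Init_stationary (h : 1 - μ + ν ≠ 0) (b : Bool) :
    ∑ a, m2Init μ ν a * m2Trans μ ν a b = m2Init μ ν b := by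
  cases b <;> simp only [Fintype.sum_bool, m2Init, m2Trans, Bool.false_eq_true, ↓reduceIte] <;>
    field_simp <;> ring

end TwoStateChain

section Divergence

variable (μ₁ ν₁ μ₂ ν₂ : ℝ)

noncomputable def m2RowKL (a : Bool) : ℝ :=
  ∑ b, m2Trans μ₁ ν₁ a b * log (m2Trans μ₁ ν₁ a b / m2Trans μ₂ ν₂ a b)

noncomputable def m2ChainKL (a : Bool) (n : ℕ) : ℝ :=
  ∑ x : Fin n → Bool, m2ChainProb μ₁ ν₁ a (List.ofFn x) *
    log (m2ChainProb μ₁ ν₁ a (List.ofFn x) / m2ChainProb μ₂ ν₂ a (List.ofFn x))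

lemma sum_m2Init_mul_m2RowKL :
    ∑ a, m2Init μ₁ ν₁ a * m2RowKL μ₁ ν₁ μ₂ ν₂ a
      = (ν₁ * binKL μ₁ μ₂ + (1 - μ₁) * binKL ν₁ ν₂) / (1 - μ₁ + ν₁) := by
  simp only [Fintype.sum_bool, m2Init, m2RowKL, m2Trans, binKL, Bool.false_eq_true, ↓reduceIte]
  ring

variable {μ₁ ν₁ μ₂ ν₂}

lemma m2ChainKL_succ (hμ₁ : μ₁ ∈ Set.Ioo (0 : ℝ) 1) (hν₁ : ν₁ ∈ Set.Ioo (0 : ℝ) 1)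
    (hμ₂ : μ₂ ∈ Set.Ioo (0 : ℝ) 1) (hν₂ : ν₂ ∈ Set.Ioo (0 : ℝ) 1) (a : Bool)
    (n : ℕ) :
    m2ChainKL μ₁ ν₁ μ₂ ν₂ a (n + 1)
      = m2RowKL μ₁ ν₁ μ₂ ν₂ a + ∑ b, m2Trans μ₁ ν₁ a b * m2ChainKL μ₁ ν₁ μ₂ ν₂ b n := by
  rw [m2ChainKL, Fintype.sum_ofFn_succ n fun l =>
    m2ChainProb μ₁ ν₁ a l * log (m2ChainProb μ₁ ν₁ a l / m2ChainProb μ₂ ν₂ a l)]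
  simp only [m2ChainProb]
  rw [Finset.sum_congr rfl fun b _ => Finset.sum_mul_mul_log_mul_div_mul _
    (m2Trans_pos hμ₁ hν₁ a b).ne' (m2Trans_pos hμ₂ hν₂ a b).ne'
    (fun x _ => (m2ChainProb_pos hμ₁ hν₁ b _).ne') (fun x _ => (m2ChainProb_pos hμ₂ hν₂ b _).ne')
    (m2ChainProb_sum μ₁ ν₁ n b)]
  rw [Finset.sum_add_distrib]
  rfl

lemma sum_m2WordProb_mul_log_succ (hμ₁ : μ₁ ∈ Set.Ioo (0 : ℝ) 1) (hν₁ : ν₁ ∈ Set.Ioo (0 : ℝ) 1)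
    (hμ₂ : μ₂ ∈ Set.Ioo (0 : ℝ) 1) (hν₂ : ν₂ ∈ Set.Ioo (0 : ℝ) 1) (n : ℕ) :
    ∑ x : Fin (n + 1) → Bool, m2WordProb μ₁ ν₁ (List.ofFn x) *
        log (m2WordProb μ₁ ν₁ (List.ofFn x) / m2WordProb μ₂ ν₂ (List.ofFn x))
      = ∑ a, m2Init μ₁ ν₁ a * log (m2Init μ₁ ν₁ a / m2Init μ₂ ν₂ a)
        + n * ((ν₁ * binKL μ₁ μ₂ + (1 - μ₁) * binKL ν₁ ν₂) / (1 - μ₁ + ν₁)) := by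
  rw [Fintype.sum_ofFn_succ n fun l =>
    m2WordProb μ₁ ν₁ l * log (m2WordProb μ₁ ν₁ l / m2WordProb μ₂ ν₂ l)]
  simp only [m2WordProb]
  rw [Finset.sum_congr rfl fun a _ => Finset.sum_mul_mul_log_mul_div_mul _
    (m2Init_pos hμ₁ hν₁ a).ne' (m2Init_pos hμ₂ hν₂ a).ne'
    (fun x _ => (m2ChainProb_pos hμ₁ hν₁ a _).ne') (fun x _ => (m2ChainProb_pos hμ₂ hν₂ a _).ne')
    (m2ChainProb_sum μ₁ ν₁ n a)]
  rw [Finset.sum_add_distrib, ← sum_m2Init_mul_m2RowKL]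
  have hden : 1 - μ₁ + ν₁ ≠ 0 := by linarith [hμ₁.2, hν₁.1]
  exact congrArg _ <| sum_stationary_mul_eq_natCast_mul (m2Init_stationary hden)
    (fun a => by simp [m2ChainKL, m2ChainProb]) (m2ChainKL_succ hμ₁ hν₁ hμ₂ hν₂) n

end Divergence

/-- The KL divergence rate between the two-state binary PFSAs `g_{(μ₁,ν₁)}` and
`g_{(μ₂,ν₂)}` equals `(ν₁ d(μ₁‖μ₂) + (1-μ₁) d(ν₁‖ν₂))/(1-μ₁+ν₁)`. -/
theorem stmt_11 (μ₁ ν₁ μ₂ ν₂ : ℝ)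
    (hμ₁ : μ₁ ∈ Set.Ioo (0 : ℝ) 1) (hν₁ : ν₁ ∈ Set.Ioo (0 : ℝ) 1)
    (hμ₂ : μ₂ ∈ Set.Ioo (0 : ℝ) 1) (hν₂ : ν₂ ∈ Set.Ioo (0 : ℝ) 1) :
    Tendsto
      (fun n : ℕ =>
        (∑ x : Fin n → Bool,
            m2WordProb μ₁ ν₁ (List.ofFn x) *
              Real.log (m2WordProb μ₁ ν₁ (List.ofFn x) / m2WordProb μ₂ ν₂ (List.ofFn x))) / n)
      atTop
      (nhds ((ν₁ * binKL μ₁ μ₂ + (1 - μ₁) * binKL ν₁ ν₂) / (1 - μ₁ + ν₁))) :=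
  tendsto_div_natCast_of_succ_eq (sum_m2WordProb_mul_log_succ hμ₁ hν₁ hμ₂ hν₂)
end
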